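/- arXiv:1912.09208 — 3 statements merged into one kernel-verified Lean document; each statement's English description precedes it below -/
import Mathlib

section
/- Let M ≥ 1 and let Δt > 0 and cell widths Δx_j > 0 for j ∈ ℤ be given, with λ_j := Δt/Δx_j. For each m ∈ {1,…,M} and j ∈ ℤ let u_{m,j+1/2} ∈ ℝ and c_{m,j} ≥ 0 be given real numbers, define the upwind flux F_{m,j+1/2} := u⁺_{m,j+1/2} c_{m,j} − u⁻_{m,j+1/2} c_{m,j+1}, and define the forward-Euler update c'_{m,j} := c_{m,j} − λ_j (F_{m,j+1/2} − F_{m,j−1/2}). Suppose U ≥ 0 satisfies u⁺_{m,j+1/2} ≤ U and u⁻_{m,j−1/2} ≤ U for all m and j, and the CFL condition 2·Δt·U ≤ Δx_j holds for every j. Then c'_{m,j} ≥ 0 for all m ∈ {1,…,M} and all j ∈ ℤ. -/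
/-!
The forward-Euler upwind update of a cell is a combination of the three neighbouring cell
values with coefficients `ν u⁻_{j+1/2}`, `ν u⁺_{j-1/2}` and `1 - ν (u⁺_{j+1/2} + u⁻_{j-1/2})`,
where `ν = Δt / Δx_j`. The first two are nonnegative, and the CFL condition `2 Δt U ≤ Δx_j`
makes the last one nonnegative, so nonnegative data stay nonnegative.
-/

theorem upwind_update_eq (ν v w cl c cr : ℝ) :
    c - ν * ((max v 0 * c - max (-v) 0 * cr) - (max w 0 * cl - max (-w) 0 * c)) =
      (1 - ν * (max v 0 + max (-w) 0)) * c + ν * max (-v) 0 * cr + ν * max w 0 * cl := by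
  ring

theorem upwind_update_nonneg {ν v w cl c cr : ℝ} (hν : 0 ≤ ν)
    (hcl : 0 ≤ cl) (hc : 0 ≤ c) (hcr : 0 ≤ cr) (hCFL : ν * (max v 0 + max (-w) 0) ≤ 1) :
    0 ≤ c - ν * ((max v 0 * c - max (-v) 0 * cr) - (max w 0 * cl - max (-w) 0 * c)) := by
  rw [upwind_update_eq]
  have hcenter : 0 ≤ (1 - ν * (max v 0 + max (-w) 0)) * c := mul_nonneg (sub_nonneg.2 hCFL) hc
  have hright : 0 ≤ ν * max (-v) 0 * cr := by positivity
  have hleft : 0 ≤ ν * max w 0 * cl := by positivity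
  linarith

theorem courant_mul_add_le_one {Δt Δx U a b : ℝ} (hΔt : 0 ≤ Δt) (hΔx : 0 < Δx)
    (ha : a ≤ U) (hb : b ≤ U) (hCFL : 2 * Δt * U ≤ Δx) :
    Δt / Δx * (a + b) ≤ 1 := by
  rw [div_mul_eq_mul_div, div_le_one hΔx]
  calc Δt * (a + b) ≤ Δt * (2 * U) := by gcongr; linarith
    _ = 2 * Δt * U := by ring
    _ ≤ Δx := hCFL

/-- `u m j` is the face velocity `u_{m,j+1/2}` and `c m j` the cell average `c_{m,j}`. -/
theorem positivity_preserving_1d_general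
    (M : ℕ) (Δt : ℝ) (hΔt : 0 < Δt)
    (Δx : ℤ → ℝ) (hΔx : ∀ j, 0 < Δx j)
    (u c : Fin M → ℤ → ℝ) (hc : ∀ m j, 0 ≤ c m j)
    (U : ℝ)
    (hUp : ∀ m j, max (u m j) 0 ≤ U)
    (hUm : ∀ m j, max (-(u m (j - 1))) 0 ≤ U)
    (hCFL : ∀ j, 2 * Δt * U ≤ Δx j) :
    ∀ m j, 0 ≤ c m j - (Δt / Δx j) *
      ((max (u m j) 0 * c m j - max (-(u m j)) 0 * c m (j + 1))
        - (max (u m (j - 1)) 0 * c m (j - 1) - max (-(u m (j - 1))) 0 * c m j)) := fun m j =>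
  upwind_update_nonneg (div_nonneg hΔt.le (hΔx j).le) (hc m (j - 1)) (hc m j) (hc m (j + 1))
    (courant_mul_add_le_one hΔt.le (hΔx j) (hUp m j) (hUm m j) (hCFL j))

/-- Positivity preservation (Theorem 3.1) for the 1D first-order upwind finite volume
scheme with forward Euler time stepping. Here `u m j` denotes `u_{m,j+1/2}` and
`c m j` the cell average `c_{m,j}`; `max w 0` and `max (-w) 0` are the positive and
negative parts of `w`. -/
theorem positivity_preserving_1d
    (M : ℕ) (hM : 1 ≤ M) (Δt : ℝ) (hΔt : 0 < Δt)
    (Δx : ℤ → ℝ) (hΔx : ∀ j, 0 < Δx j)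
    (u c : Fin M → ℤ → ℝ) (hc : ∀ m j, 0 ≤ c m j)
    (U : ℝ) (hU : 0 ≤ U)
    (hUp : ∀ m j, max (u m j) 0 ≤ U)
    (hUm : ∀ m j, max (-(u m (j - 1))) 0 ≤ U)
    (hCFL : ∀ j, 2 * Δt * U ≤ Δx j) :
    ∀ m j, 0 ≤ c m j - (Δt / Δx j) *
      ((max (u m j) 0 * c m j - max (-(u m j)) 0 * c m (j + 1))
        - (max (u m (j - 1)) 0 * c m (j - 1) - max (-(u m (j - 1))) 0 * c m j)) :=
  positivity_preserving_1d_general M Δt hΔt Δx hΔx u c hc U hUp hUm hCFL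
end

section
/- Let M ≥ 1, Δt > 0, and cell widths Δx_j > 0 and Δy_k > 0 for j,k ∈ ℤ with λ^x_j := Δt/Δx_j and λ^y_k := Δt/Δy_k. For each m ∈ {1,…,M} and j,k ∈ ℤ let u_{m,j+1/2,k} ∈ ℝ, v_{m,j,k+1/2} ∈ ℝ, and c_{m,j,k} ≥ 0 be given. Define fluxes F^x_{m,j+1/2,k} := u⁺_{m,j+1/2,k} c_{m,j,k} − u⁻_{m,j+1/2,k} c_{m,j+1,k} and F^y_{m,j,k+1/2} := v⁺_{m,j,k+1/2} c_{m,j,k} − v⁻_{m,j,k+1/2} c_{m,j,k+1}, and the forward-Euler update c'_{m,j,k} := c_{m,j,k} − λ^x_j (F^x_{m,j+1/2,k} − F^x_{m,j−1/2,k}) − λ^y_k (F^y_{m,j,k+1/2} − F^y_{m,j,k−1/2}). Suppose U ≥ 0 and V ≥ 0 satisfy u⁺_{m,j+1/2,k} ≤ U, u⁻_{m,j−1/2,k} ≤ U, v⁺_{m,j,k+1/2} ≤ V, v⁻_{m,j,k−1/2} ≤ V for all m,j,k, and the CFL conditions 4·Δt·U ≤ Δx_j and 4·Δt·V ≤ Δy_k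 hold for all j,k. Then c'_{m,j,k} ≥ 0 for all m ∈ {1,…,M} and all j,k ∈ ℤ. -/
/-!
Expanding the fluxes writes the updated value `c'_{m,j,k}` as a combination of `c_{m,j,k}` and its
four neighbours. Upwinding makes every neighbour coefficient nonnegative, and the CFL conditions
keep the diagonal coefficient `1 - λˣ_j (u⁺_{j+1/2} + u⁻_{j-1/2}) - λʸ_k (v⁺_{k+1/2} + v⁻_{k-1/2})`
at least `0`, each direction removing at most `1/2`.
-/

theorem upwind_flux_diff_le {ν c cL cR w w' : ℝ} (hν : 0 ≤ ν) (hcL : 0 ≤ cL) (hcR : 0 ≤ cR) :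
    ν * ((max w 0 * c - max (-w) 0 * cR) - (max w' 0 * cL - max (-w') 0 * c))
      ≤ ν * (max w 0 + max (-w') 0) * c := by
  have hinflow : 0 ≤ ν * (max (-w) 0 * cR + max w' 0 * cL) :=
    mul_nonneg hν (add_nonneg (mul_nonneg (le_max_right _ _) hcR) (mul_nonneg (le_max_right _ _) hcL))
  linarith

theorem div_mul_add_le_half_of_cfl {Δt h U p q : ℝ} (hΔt : 0 ≤ Δt) (hh : 0 < h)
    (hpU : p ≤ U) (hqU : q ≤ U) (hCFL : 4 * Δt * U ≤ h) :
    Δt / h * (p + q) ≤ 1 / 2 :=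
  calc Δt / h * (p + q) ≤ Δt / h * (2 * U) := by gcongr; linarith
    _ = 2 * Δt * U / h := by ring
    _ ≤ 1 / 2 := by rw [div_le_iff₀ hh]; linarith

theorem positivity_preserving_2d_general
    (M : ℕ) (Δt : ℝ) (hΔt : 0 < Δt)
    (Δx Δy : ℤ → ℝ) (hΔx : ∀ j, 0 < Δx j) (hΔy : ∀ k, 0 < Δy k)
    (u v : Fin M → ℤ → ℤ → ℝ) (c : Fin M → ℤ → ℤ → ℝ)
    (hc : ∀ m j k, 0 ≤ c m j k)
    (U V : ℝ)
    (hUp : ∀ m j k, max (u m j k) 0 ≤ U)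
    (hUm : ∀ m j k, max (-(u m (j - 1) k)) 0 ≤ U)
    (hVp : ∀ m j k, max (v m j k) 0 ≤ V)
    (hVm : ∀ m j k, max (-(v m j (k - 1))) 0 ≤ V)
    (hCFLx : ∀ j, 4 * Δt * U ≤ Δx j) (hCFLy : ∀ k, 4 * Δt * V ≤ Δy k) :
    ∀ m j k, 0 ≤ c m j k
      - (Δt / Δx j) *
        ((max (u m j k) 0 * c m j k - max (-(u m j k)) 0 * c m (j + 1) k)
          - (max (u m (j - 1) k) 0 * c m (j - 1) k - max (-(u m (j - 1) k)) 0 * c m j k))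
      - (Δt / Δy k) *
        ((max (v m j k) 0 * c m j k - max (-(v m j k)) 0 * c m j (k + 1))
          - (max (v m j (k - 1)) 0 * c m j (k - 1) - max (-(v m j (k - 1))) 0 * c m j k)) := by
  intro m j k
  have hνx := div_mul_add_le_half_of_cfl hΔt.le (hΔx j) (hUp m j k) (hUm m j k) (hCFLx j)
  have hνy := div_mul_add_le_half_of_cfl hΔt.le (hΔy k) (hVp m j k) (hVm m j k) (hCFLy k)
  have hx := upwind_flux_diff_le (c := c m j k) (div_pos hΔt (hΔx j)).le
    (hc m (j - 1) k) (hc m (j + 1) k) (w := u m j k) (w' := u m (j - 1) k)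
  have hy := upwind_flux_diff_le (c := c m j k) (div_pos hΔt (hΔy k)).le
    (hc m j (k - 1)) (hc m j (k + 1)) (w := v m j k) (w' := v m j (k - 1))
  have hdiag : 0 ≤ (1 - Δt / Δx j * (max (u m j k) 0 + max (-(u m (j - 1) k)) 0)
      - Δt / Δy k * (max (v m j k) 0 + max (-(v m j (k - 1))) 0)) * c m j k :=
    mul_nonneg (by linarith) (hc m j k)
  linarith

/-- Positivity preservation (Theorem 3.3) for the 2D first-order upwind finite volume
scheme with forward Euler time stepping. Here `u m j k` denotes `u_{m,j+1/2,k}`,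
`v m j k` denotes `v_{m,j,k+1/2}`, and `c m j k` the cell average `c_{m,j,k}`;
`max w 0` and `max (-w) 0` are the positive and negative parts of `w`. -/
theorem positivity_preserving_2d
    (M : ℕ) (hM : 1 ≤ M) (Δt : ℝ) (hΔt : 0 < Δt)
    (Δx Δy : ℤ → ℝ) (hΔx : ∀ j, 0 < Δx j) (hΔy : ∀ k, 0 < Δy k)
    (u v : Fin M → ℤ → ℤ → ℝ) (c : Fin M → ℤ → ℤ → ℝ)
    (hc : ∀ m j k, 0 ≤ c m j k)
    (U V : ℝ) (hU : 0 ≤ U) (hV : 0 ≤ V)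
    (hUp : ∀ m j k, max (u m j k) 0 ≤ U)
    (hUm : ∀ m j k, max (-(u m (j - 1) k)) 0 ≤ U)
    (hVp : ∀ m j k, max (v m j k) 0 ≤ V)
    (hVm : ∀ m j k, max (-(v m j (k - 1))) 0 ≤ V)
    (hCFLx : ∀ j, 4 * Δt * U ≤ Δx j) (hCFLy : ∀ k, 4 * Δt * V ≤ Δy k) :
    ∀ m j k, 0 ≤ c m j k
      - (Δt / Δx j) *
        ((max (u m j k) 0 * c m j k - max (-(u m j k)) 0 * c m (j + 1) k)
          - (max (u m (j - 1) k) 0 * c m (j - 1) k - max (-(u m (j - 1) k)) 0 * c m j k))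
      - (Δt / Δy k) *
        ((max (v m j k) 0 * c m j k - max (-(v m j k)) 0 * c m j (k + 1))
          - (max (v m j (k - 1)) 0 * c m j (k - 1) - max (-(v m j (k - 1))) 0 * c m j k)) :=
  positivity_preserving_2d_general M Δt hΔt Δx Δy hΔx hΔy u v c hc U V hUp hUm hVp hVm hCFLx hCFLy
end

section
/- Let M ≥ 1, N ≥ 1, cell widths Δx_j > 0 for j ∈ {−N,…,N}, integer valences z_1,…,z_M, and symmetric discrete kernels K, W : ℤ → ℝ with K_n = K_{−n} and W_n = W_{−n} for all n. Suppose c_{m,j} : ℝ → (0,∞) is differentiable for each m ∈ {1,…,M} and j ∈ {−N,…,N}. Define ρ_j(t) := Σ_{m=1}^M z_m c_{m,j}(t), θ_j(t) := Σ_{m=1}^M c_{m,j}(t), the discrete chemical potential ψ_{m,j}(t) := 1 + log c_{m,j}(t) + Σ_{i=−N}^{N} Δx_i ( z_m K_{j−i} ρ_i(t) + W_{j−i} θ_i(t) ), and for j ∈ {−N,…,N−1} the discrete velocity u_{m,j+1/2}(t) := −(ψ_{m,j+1}(t) − ψ_{m,j}(t))/Δx_j and the upwind flux F_{m,j+1/2}(t)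 := u⁺_{m,j+1/2}(t) c_{m,j}(t) − u⁻_{m,j+1/2}(t) c_{m,j+1}(t), with the no-flux boundary convention F_{m,−N−1/2}(t) = F_{m,N+1/2}(t) = 0. Assume the semi-discrete scheme d/dt c_{m,j}(t) = −(F_{m,j+1/2}(t) − F_{m,j−1/2}(t))/Δx_j holds for all m, j, t. Define the discrete free energy E_Δ(t) := Σ_{m=1}^M Σ_{j=−N}^{N} Δx_j c_{m,j}(t) log c_{m,j}(t) + (1/2) Σ_{i=−N}^{N} Σ_{j=−N}^{N} Δx_j Δx_i ( K_{j−i} ρ_i(t) ρ_j(t) + W_{j−i} θ_i(t) θ_j(t) ) and the discrete dissipation D_Δ(t) := Σ_{m=1}^M Σ_{j=−N}^{N−1} Δx_j (u_{m,j+1/2}(t))² · min( c_{m,j}(t), c_{m,j+1}(t) ). Then E_Δ is differentiable and d/dt E_Δ(t) ≤ −D_Δ(t) ≤ 0 for all t. -/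
/-! The chemical potential `ψ_{m,j}` is the discrete variational derivative of the free energy
(by the symmetry of `K` and `W` the interaction energy, a quadratic form, contributes its
gradient only once), so `E' = ∑ Δx_j c'_{m,j} ψ_{m,j}`. Inserting the scheme and summing by parts
against the vanishing boundary fluxes turns this into `∑ F_{m,j+1/2} (ψ_{m,j+1} - ψ_{m,j})
= -∑ Δx_j u_{m,j+1/2} F_{m,j+1/2}`, and the upwind flux satisfies
`u F ≥ u² min (c_{m,j}, c_{m,j+1})`. -/

open Finset Real

theorem sum_Icc_by_parts {R : Type*} [CommRing R] {a b : ℤ} (hab : a ≤ b) (f g : ℤ → R) :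
    ∑ j ∈ Icc a b, f j * (g j - g (j - 1)) =
      f b * g b - f a * g (a - 1) - ∑ j ∈ Icc a (b - 1), g j * (f (j + 1) - f j) := by
  induction b, hab using Int.leInduction with
  | base => simp [mul_sub]
  | succ b hab ih =>
    have hsplit : Icc a b = insert b (Icc a (b - 1)) := by ext; simp; omega
    rw [← insert_Icc_right_eq_Icc_add_one (by omega), sum_insert (by simp), ih,
      add_sub_cancel_right, hsplit, sum_insert (by simp)]
    ring

theorem HasDerivAt.mul_log {f : ℝ → ℝ} {f' t : ℝ} (hf : HasDerivAt f f' t) (h : f t ≠ 0) :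
    HasDerivAt (fun τ => f τ * Real.log (f τ)) (f' * (1 + Real.log (f t))) t :=
  ((hasDerivAt_mul_log h).comp t hf).congr_deriv (by ring)

theorem hasDerivAt_half_sum_sum_mul_of_symm {ι : Type*} (s : Finset ι) {A : ι → ι → ℝ}
    (hA : ∀ i j, A i j = A j i) {r : ι → ℝ → ℝ} {r' : ι → ℝ} {t : ℝ}
    (hr : ∀ i ∈ s, HasDerivAt (r i) (r' i) t) :
    HasDerivAt (fun τ => 1 / 2 * ∑ i ∈ s, ∑ j ∈ s, A i j * r i τ * r j τ)
      (∑ i ∈ s, ∑ j ∈ s, A i j * r i t * r' j) t := by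
  have h := (HasDerivAt.fun_sum fun i hi => HasDerivAt.fun_sum fun j hj =>
    ((hr i hi).const_mul (A i j)).fun_mul (hr j hj)).const_mul (1 / 2 : ℝ)
  refine h.congr_deriv ?_
  have hswap : ∑ i ∈ s, ∑ j ∈ s, A i j * r' i * r j t =
      ∑ i ∈ s, ∑ j ∈ s, A i j * r i t * r' j := by
    rw [sum_comm]
    exact sum_congr rfl fun i _ => sum_congr rfl fun j _ => by rw [hA]; ring
  simp only [mul_add, sum_add_distrib, hswap]
  ring

theorem hasDerivAt_interaction_energy {G κ : Type*} [AddGroup G] [Fintype κ] (s : Finset G)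
    (w V : G → ℝ) (hV : ∀ n, V n = V (-n)) (a : κ → ℝ) {c : κ → G → ℝ → ℝ}
    {c' : κ → G → ℝ} {t : ℝ} (hc : ∀ m, ∀ j ∈ s, HasDerivAt (c m j) (c' m j) t)
    {r : G → ℝ → ℝ} (hr : ∀ j τ, r j τ = ∑ m, a m * c m j τ) :
    HasDerivAt (fun τ => 1 / 2 * ∑ i ∈ s, ∑ j ∈ s, w j * w i * V (j - i) * r i τ * r j τ)
      (∑ m, ∑ j ∈ s, w j * c' m j * (a m * ∑ i ∈ s, w i * V (j - i) * r i t)) t := by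
  have hr' : ∀ j ∈ s, HasDerivAt (r j) (∑ m, a m * c' m j) t := fun j hj => by
    rw [funext (hr j)]
    exact HasDerivAt.fun_sum fun m _ => (hc m j hj).const_mul (a m)
  refine (hasDerivAt_half_sum_sum_mul_of_symm s (fun i j => ?_) hr').congr_deriv ?_
  · rw [hV, neg_sub]; ring
  · rw [sum_comm, sum_comm (s := univ)]
    refine sum_congr rfl fun j _ => ?_
    simp only [mul_sum]
    rw [sum_comm]
    exact sum_congr rfl fun m _ => sum_congr rfl fun i _ => by ring

theorem hasDerivAt_free_energy {M : ℕ} (s : Finset ℤ) (Δx : ℤ → ℝ) (z : Fin M → ℤ)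
    {K W : ℤ → ℝ} (hK : ∀ n, K n = K (-n)) (hW : ∀ n, W n = W (-n))
    {c : Fin M → ℤ → ℝ → ℝ} {c' : Fin M → ℤ → ℝ} {t : ℝ}
    (hc : ∀ m, ∀ j ∈ s, HasDerivAt (c m j) (c' m j) t) (hc0 : ∀ m, ∀ j ∈ s, c m j t ≠ 0)
    {ρ θ : ℤ → ℝ → ℝ} (hρ : ∀ j τ, ρ j τ = ∑ m, (z m : ℝ) * c m j τ)
    (hθ : ∀ j τ, θ j τ = ∑ m, c m j τ) {ψ : Fin M → ℤ → ℝ}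
    (hψ : ∀ m, ∀ j ∈ s, ψ m j = 1 + Real.log (c m j t)
      + ∑ i ∈ s, Δx i * ((z m : ℝ) * K (j - i) * ρ i t + W (j - i) * θ i t)) :
    HasDerivAt (fun τ => (∑ m, ∑ j ∈ s, Δx j * (c m j τ * Real.log (c m j τ)))
      + 1 / 2 * ∑ i ∈ s, ∑ j ∈ s,
          Δx j * Δx i * (K (j - i) * ρ i τ * ρ j τ + W (j - i) * θ i τ * θ j τ))
      (∑ m, ∑ j ∈ s, Δx j * c' m j * ψ m j) t := by
  have hentropy : HasDerivAt (fun τ => ∑ m, ∑ j ∈ s, Δx j * (c m j τ * Real.log (c m j τ)))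
      (∑ m, ∑ j ∈ s, Δx j * c' m j * (1 + Real.log (c m j t))) t :=
    HasDerivAt.fun_sum fun m _ => HasDerivAt.fun_sum fun j hj =>
      (((hc m j hj).mul_log (hc0 m j hj)).const_mul (Δx j)).congr_deriv (by ring)
  have hcharge := hasDerivAt_interaction_energy s Δx K hK (fun m => (z m : ℝ)) hc hρ
  have hmass := hasDerivAt_interaction_energy s Δx W hW 1 hc (by simpa using hθ)
  refine ((hentropy.fun_add (hcharge.fun_add hmass)).congr_deriv ?_).congr_of_eventuallyEq
    (.of_forall fun τ => ?_)
  · simp only [← sum_add_distrib]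
    refine sum_congr rfl fun m _ => sum_congr rfl fun j hj => ?_
    have hpotential : ∑ i ∈ s, Δx i * ((z m : ℝ) * K (j - i) * ρ i t + W (j - i) * θ i t) =
        z m * ∑ i ∈ s, Δx i * K (j - i) * ρ i t + ∑ i ∈ s, Δx i * W (j - i) * θ i t := by
      rw [mul_sum, ← sum_add_distrib]
      exact sum_congr rfl fun i _ => by ring
    rw [hψ m j hj, hpotential, Pi.one_apply]
    ring
  · simp only [← mul_add, ← sum_add_distrib]
    congr 2
    exact sum_congr rfl fun i _ => sum_congr rfl fun j _ => by ring

theorem sq_mul_min_le_mul_upwind (v a b : ℝ) :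
    v ^ 2 * min a b ≤ v * (max v 0 * a - max (-v) 0 * b) := by
  rcases le_total v 0 with hv | hv
  · rw [max_eq_right hv, max_eq_left (neg_nonneg.2 hv)]
    nlinarith [min_le_right a b]
  · rw [max_eq_left hv, max_eq_right (neg_nonpos.2 hv)]
    nlinarith [min_le_left a b]

theorem upwind_flux_mul_sub_le {Δ v ψ₀ ψ₁ : ℝ} (hΔ : 0 < Δ) (hv : v = -(ψ₁ - ψ₀) / Δ)
    (a b : ℝ) :
    (max v 0 * a - max (-v) 0 * b) * (ψ₁ - ψ₀) ≤ -(Δ * v ^ 2 * min a b) := by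
  have hψ : ψ₁ - ψ₀ = -(Δ * v) := by rw [hv]; field_simp
  rw [hψ]
  linear_combination mul_le_mul_of_nonneg_left (sq_mul_min_le_mul_upwind v a b) hΔ.le

/-- `F m j t` is the flux `F_{m,j+1/2}(t)` and `u m j t` the velocity `u_{m,j+1/2}(t)`. -/
theorem discrete_free_energy_dissipation_1d_general
    (M N : ℕ)
    (Δx : ℤ → ℝ) (hΔx : ∀ j ∈ Finset.Icc (-(N : ℤ)) (N : ℤ), 0 < Δx j)
    (z : Fin M → ℤ) (K W : ℤ → ℝ)
    (hKsymm : ∀ n, K n = K (-n)) (hWsymm : ∀ n, W n = W (-n))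
    (c : Fin M → ℤ → ℝ → ℝ)
    (hcpos : ∀ m, ∀ j ∈ Finset.Icc (-(N : ℤ)) (N : ℤ), ∀ t, 0 < c m j t)
    (hcdiff : ∀ m, ∀ j ∈ Finset.Icc (-(N : ℤ)) (N : ℤ), Differentiable ℝ (c m j))
    (ρ θ : ℤ → ℝ → ℝ)
    (hρ : ∀ j t, ρ j t = ∑ m, (z m : ℝ) * c m j t)
    (hθ : ∀ j t, θ j t = ∑ m, c m j t)
    (ψ : Fin M → ℤ → ℝ → ℝ)
    (hψ : ∀ m, ∀ j ∈ Finset.Icc (-(N : ℤ)) (N : ℤ), ∀ t,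
      ψ m j t = 1 + Real.log (c m j t)
        + ∑ i ∈ Finset.Icc (-(N : ℤ)) (N : ℤ),
            Δx i * ((z m : ℝ) * K (j - i) * ρ i t + W (j - i) * θ i t))
    (u : Fin M → ℤ → ℝ → ℝ)
    (hu : ∀ m, ∀ j ∈ Finset.Icc (-(N : ℤ)) ((N : ℤ) - 1), ∀ t,
      u m j t = -(ψ m (j + 1) t - ψ m j t) / Δx j)
    (F : Fin M → ℤ → ℝ → ℝ)
    (hF : ∀ m, ∀ j ∈ Finset.Icc (-(N : ℤ)) ((N : ℤ) - 1), ∀ t,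
      F m j t = max (u m j t) 0 * c m j t - max (-(u m j t)) 0 * c m (j + 1) t)
    (hFl : ∀ m t, F m (-(N : ℤ) - 1) t = 0)
    (hFr : ∀ m t, F m (N : ℤ) t = 0)
    (hscheme : ∀ m, ∀ j ∈ Finset.Icc (-(N : ℤ)) (N : ℤ), ∀ t,
      deriv (c m j) t = -(F m j t - F m (j - 1) t) / Δx j)
    (E D : ℝ → ℝ)
    (hE : ∀ t, E t =
      (∑ m, ∑ j ∈ Finset.Icc (-(N : ℤ)) (N : ℤ), Δx j * (c m j t * Real.log (c m j t)))
      + (1 / 2) * ∑ i ∈ Finset.Icc (-(N : ℤ)) (N : ℤ), ∑ j ∈ Finset.Icc (-(N : ℤ)) (N : ℤ),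
          Δx j * Δx i * (K (j - i) * ρ i t * ρ j t + W (j - i) * θ i t * θ j t))
    (hD : ∀ t, D t = ∑ m, ∑ j ∈ Finset.Icc (-(N : ℤ)) ((N : ℤ) - 1),
      Δx j * (u m j t) ^ 2 * min (c m j t) (c m (j + 1) t)) :
    Differentiable ℝ E ∧ ∀ t, deriv E t ≤ -D t ∧ -D t ≤ 0 := by
  have hcell : ∀ j ∈ Icc (-(N : ℤ)) (N - 1), j ∈ Icc (-(N : ℤ)) N ∧ j + 1 ∈ Icc (-(N : ℤ)) N :=
    fun j hj => by simp only [mem_Icc] at hj ⊢; omega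
  have hEderiv : ∀ t, HasDerivAt E
      (∑ m, ∑ j ∈ Icc (-(N : ℤ)) N, Δx j * deriv (c m j) t * ψ m j t) t := fun t => by
    rw [funext hE]
    exact hasDerivAt_free_energy _ Δx z hKsymm hWsymm
      (fun m j hj => (hcdiff m j hj t).hasDerivAt) (fun m j hj => (hcpos m j hj t).ne') hρ hθ
      (fun m j hj => hψ m j hj t)
  refine ⟨fun t => (hEderiv t).differentiableAt, fun t => ⟨?_, ?_⟩⟩
  · rw [(hEderiv t).deriv, hD, ← sum_neg_distrib]
    refine sum_le_sum fun m _ => ?_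
    calc ∑ j ∈ Icc (-(N : ℤ)) N, Δx j * deriv (c m j) t * ψ m j t
        = -∑ j ∈ Icc (-(N : ℤ)) N, ψ m j t * (F m j t - F m (j - 1) t) := by
          rw [← sum_neg_distrib]
          refine sum_congr rfl fun j hj => ?_
          rw [hscheme m j hj, mul_div_cancel₀ _ (hΔx j hj).ne']
          ring
      _ = ∑ j ∈ Icc (-(N : ℤ)) (N - 1), F m j t * (ψ m (j + 1) t - ψ m j t) := by
          rw [sum_Icc_by_parts (by omega), hFl, hFr]
          ring
      _ ≤ -∑ j ∈ Icc (-(N : ℤ)) (N - 1), Δx j * u m j t ^ 2 * min (c m j t) (c m (j + 1) t) := by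
          rw [← sum_neg_distrib]
          refine sum_le_sum fun j hj => ?_
          rw [hF m j hj]
          exact upwind_flux_mul_sub_le (hΔx j (hcell j hj).1) (hu m j hj t) _ _
  · rw [hD, neg_nonpos]
    refine sum_nonneg fun m _ => sum_nonneg fun j hj => ?_
    exact mul_nonneg (mul_nonneg (hΔx j (hcell j hj).1).le (sq_nonneg _))
      (le_min (hcpos m j (hcell j hj).1 t).le (hcpos m (j + 1) (hcell j hj).2 t).le)

/-- Discrete free energy–dissipation estimate (Theorem 3.2) for the one-dimensional
semi-discrete upwind finite volume scheme with no-flux boundary conditions.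
Here `F m j t` denotes the flux `F_{m,j+1/2}(t)` and `u m j t` the velocity
`u_{m,j+1/2}(t)`; the boundary fluxes `F_{m,-N-1/2}` and `F_{m,N+1/2}` vanish. -/
theorem discrete_free_energy_dissipation_1d
    (M N : ℕ) (hM : 1 ≤ M) (hN : 1 ≤ N)
    (Δx : ℤ → ℝ) (hΔx : ∀ j ∈ Finset.Icc (-(N : ℤ)) (N : ℤ), 0 < Δx j)
    (z : Fin M → ℤ) (K W : ℤ → ℝ)
    (hKsymm : ∀ n, K n = K (-n)) (hWsymm : ∀ n, W n = W (-n))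
    (c : Fin M → ℤ → ℝ → ℝ)
    (hcpos : ∀ m, ∀ j ∈ Finset.Icc (-(N : ℤ)) (N : ℤ), ∀ t, 0 < c m j t)
    (hcdiff : ∀ m, ∀ j ∈ Finset.Icc (-(N : ℤ)) (N : ℤ), Differentiable ℝ (c m j))
    (ρ θ : ℤ → ℝ → ℝ)
    (hρ : ∀ j t, ρ j t = ∑ m, (z m : ℝ) * c m j t)
    (hθ : ∀ j t, θ j t = ∑ m, c m j t)
    (ψ : Fin M → ℤ → ℝ → ℝ)
    (hψ : ∀ m, ∀ j ∈ Finset.Icc (-(N : ℤ)) (N : ℤ), ∀ t,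
      ψ m j t = 1 + Real.log (c m j t)
        + ∑ i ∈ Finset.Icc (-(N : ℤ)) (N : ℤ),
            Δx i * ((z m : ℝ) * K (j - i) * ρ i t + W (j - i) * θ i t))
    (u : Fin M → ℤ → ℝ → ℝ)
    (hu : ∀ m, ∀ j ∈ Finset.Icc (-(N : ℤ)) ((N : ℤ) - 1), ∀ t,
      u m j t = -(ψ m (j + 1) t - ψ m j t) / Δx j)
    (F : Fin M → ℤ → ℝ → ℝ)
    (hF : ∀ m, ∀ j ∈ Finset.Icc (-(N : ℤ)) ((N : ℤ) - 1), ∀ t,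
      F m j t = max (u m j t) 0 * c m j t - max (-(u m j t)) 0 * c m (j + 1) t)
    (hFl : ∀ m t, F m (-(N : ℤ) - 1) t = 0)
    (hFr : ∀ m t, F m (N : ℤ) t = 0)
    (hscheme : ∀ m, ∀ j ∈ Finset.Icc (-(N : ℤ)) (N : ℤ), ∀ t,
      deriv (c m j) t = -(F m j t - F m (j - 1) t) / Δx j)
    (E D : ℝ → ℝ)
    (hE : ∀ t, E t =
      (∑ m, ∑ j ∈ Finset.Icc (-(N : ℤ)) (N : ℤ), Δx j * (c m j t * Real.log (c m j t)))
      + (1 / 2) * ∑ i ∈ Finset.Icc (-(N : ℤ)) (N : ℤ), ∑ j ∈ Finset.Icc (-(N : ℤ)) (N : ℤ),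
          Δx j * Δx i * (K (j - i) * ρ i t * ρ j t + W (j - i) * θ i t * θ j t))
    (hD : ∀ t, D t = ∑ m, ∑ j ∈ Finset.Icc (-(N : ℤ)) ((N : ℤ) - 1),
      Δx j * (u m j t) ^ 2 * min (c m j t) (c m (j + 1) t)) :
    Differentiable ℝ E ∧ ∀ t, deriv E t ≤ -D t ∧ -D t ≤ 0 :=
  discrete_free_energy_dissipation_1d_general M N Δx hΔx z K W hKsymm hWsymm c hcpos hcdiff ρ θ hρ
    hθ ψ hψ u hu F hF hFl hFr hscheme E D hE hD
end
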